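/- For every real r ≠ 0, there exists δ > 0 such that for all T with 0 < T < δ, the variances of the two coordinates under the uniform distribution on the arc satisfy Var₁(T) < Var₂(T); that is, near T = 0 the variance along the tangential direction strictly dominates the variance along the normal direction. -/

import Mathlib

open MeasureTheory intervalIntegral

/-- Mean of the first coordinate under the uniform distribution on the arc. -/
noncomputable def mu1 (r T : ℝ) : ℝ := (1 / (2 * T)) * ∫ t in (-T)..T, r * Real.cos t

/-- Variance of the first coordinate under the uniform distribution on the arc. -/
noncomputable def Var1 (r T : ℝ) : ℝ :=
  (1 / (2 * T)) * ∫ t in (-T)..T, (r * Real.cos t - mu1 r T) ^ 2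

/-- Variance of the second coordinate under the uniform distribution on the arc. -/
noncomputable def Var2 (r T : ℝ) : ℝ :=
  (1 / (2 * T)) * ∫ t in (-T)..T, (r * Real.sin t) ^ 2

/-!
Both variances are elementary integrals: `Var₂ = r²/2 - r² sin T cos T / (2T)` and
`Var₁ = r²/2 + r² sin T cos T / (2T) - (r sin T / T)²`, so
`Var₂ - Var₁ = r² sin T (sin T - T cos T) / T²`. For `0 < T < π` both `sin T` and
`sin T - T cos T` are positive (the latter is `tan T > T` when `cos T > 0`), so `δ = π` works.
-/

namespace Real

theorem mul_cos_lt_sin {x : ℝ} (hx₀ : 0 < x) (hxπ : x < π) : x * cos x < sin x := by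
  rcases lt_or_ge x (π / 2) with hx | hx
  · have hcos : 0 < cos x := cos_pos_of_mem_Ioo ⟨by linarith, hx⟩
    have htan := mul_lt_mul_of_pos_right (lt_tan hx₀ hx) hcos
    rwa [tan_eq_sin_div_cos, div_mul_cancel₀ _ hcos.ne'] at htan
  · have hcos : cos x ≤ 0 := cos_nonpos_of_pi_div_two_le_of_le hx (by linarith)
    have hsin : 0 < sin x := sin_pos_of_pos_of_lt_pi hx₀ hxπ
    nlinarith

end Real

open Real

theorem intervalIntegral.integral_sub_const_sq {f : ℝ → ℝ} {a b : ℝ} (c : ℝ)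
    (hf : IntervalIntegrable f volume a b)
    (hf2 : IntervalIntegrable (fun x => f x ^ 2) volume a b) :
    ∫ x in a..b, (f x - c) ^ 2 =
      (∫ x in a..b, f x ^ 2) - 2 * c * (∫ x in a..b, f x) + (b - a) * c ^ 2 := by
  have hexpand : (fun x => (f x - c) ^ 2) = fun x => (f x ^ 2 - 2 * c * f x) + c ^ 2 := by
    funext x; ring
  rw [hexpand, integral_add (hf2.sub (hf.const_mul _)) intervalIntegrable_const,
    integral_sub hf2 (hf.const_mul _), integral_const_mul, integral_const, smul_eq_mul]

theorem integral_neg_to_self_mul_cos (r T : ℝ) : ∫ t in (-T)..T, r * cos t = 2 * r * sin T := by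
  rw [intervalIntegral.integral_const_mul, integral_cos, sin_neg]; ring

theorem integral_neg_to_self_mul_cos_sq (r T : ℝ) :
    ∫ t in (-T)..T, (r * cos t) ^ 2 = r ^ 2 * (T + sin T * cos T) := by
  simp_rw [mul_pow]
  rw [intervalIntegral.integral_const_mul, integral_cos_sq, sin_neg, cos_neg]; ring

theorem integral_neg_to_self_mul_sin_sq (r T : ℝ) :
    ∫ t in (-T)..T, (r * sin t) ^ 2 = r ^ 2 * (T - sin T * cos T) := by
  simp_rw [mul_pow]
  rw [intervalIntegral.integral_const_mul, integral_sin_sq, sin_neg, cos_neg]; ring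

theorem mu1_eq (r T : ℝ) : mu1 r T = r * sin T / T := by
  rw [mu1, integral_neg_to_self_mul_cos, div_mul_eq_mul_div, one_mul, mul_assoc,
    mul_div_mul_left _ _ two_ne_zero]

theorem Var1_eq {T : ℝ} (hT : T ≠ 0) (r : ℝ) :
    Var1 r T = r ^ 2 * (T + sin T * cos T) / (2 * T) - (r * sin T / T) ^ 2 := by
  have hcos : Continuous fun t => r * cos t := by fun_prop
  rw [Var1, integral_sub_const_sq _ (hcos.intervalIntegrable _ _)
    ((hcos.pow 2).intervalIntegrable _ _), integral_neg_to_self_mul_cos_sq,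
    integral_neg_to_self_mul_cos, mu1_eq]
  field_simp
  ring

theorem Var2_eq (r T : ℝ) : Var2 r T = r ^ 2 * (T - sin T * cos T) / (2 * T) := by
  rw [Var2, integral_neg_to_self_mul_sin_sq]; ring

theorem Var2_sub_Var1 {T : ℝ} (hT : T ≠ 0) (r : ℝ) :
    Var2 r T - Var1 r T = r ^ 2 * sin T * (sin T - T * cos T) / T ^ 2 := by
  rw [Var1_eq hT, Var2_eq]
  field_simp
  ring

/-- for every real `r ≠ 0`, there exists `δ > 0` such that for all `T`
with `0 < T < δ`, the variances satisfy `Var₁(T) < Var₂(T)`. -/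
theorem variance_tangential_dominates (r : ℝ) (hr : r ≠ 0) :
    ∃ δ : ℝ, 0 < δ ∧ ∀ T : ℝ, 0 < T → T < δ → Var1 r T < Var2 r T := by
  refine ⟨π, pi_pos, fun T hT₀ hTπ => sub_pos.mp ?_⟩
  have hsin : 0 < sin T := sin_pos_of_pos_of_lt_pi hT₀ hTπ
  have hgap : 0 < sin T - T * cos T := sub_pos.mpr (mul_cos_lt_sin hT₀ hTπ)
  rw [Var2_sub_Var1 hT₀.ne']
  positivity
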